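/- arXiv:2012.13708 — 3 statements merged into one kernel-verified Lean document; each statement's English description precedes it below -/
import Mathlib

section
/- Let μ_j > 0, λ_j > 0 for j in a finite set J_i with Σ_{j∈J_i} λ_j/μ_j = 1. Fix nonnegative reals Q_j and q_j* with Σ_{j∈J_i}(Q_j − q_j*)/μ_j = 0, and partition J_i into J_i^> = {j : Q_j > q_j*} and J_i^≤ = {j : Q_j ≤ q_j*} with J_i^≤ nonempty. Then L ∈ ℝ₊ satisfies the fixed-point equation L = Σ_{j∈J_i} (λ_j L − q_j* + Q_j)⁺ / μ_j if and only if L ≥ max_{j∈J_i^≤} (q_j* − Q_j)/λ_j. -/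
/-!
The workload identities give `∑ j, (λ_j L - q_j* + Q_j) / μ_j = L` for every `L`, so `L` is a
fixed point exactly when taking positive parts leaves this sum unchanged, i.e. when every
`λ_j L - q_j* + Q_j` is nonnegative. For `j` with `Q_j > q_j*` this holds automatically, and for
the other `j` it says `L ≥ (q_j* - Q_j) / λ_j`.
-/

open Finset

lemma sum_max_zero_div_eq_sum_div_iff {ι : Type*} {s : Finset ι} {f μ : ι → ℝ}
    (hμ : ∀ i ∈ s, 0 < μ i) :
    ∑ i ∈ s, max (f i) 0 / μ i = ∑ i ∈ s, f i / μ i ↔ ∀ i ∈ s, 0 ≤ f i := by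
  rw [eq_comm, sum_eq_sum_iff_of_le fun i hi =>
    div_le_div_of_nonneg_right (le_max_left _ _) (hμ i hi).le]
  refine forall₂_congr fun i hi => ?_
  rw [div_left_inj' (hμ i hi).ne', eq_comm, max_eq_left_iff]

lemma sum_div_eq_of_workload {ι : Type*} [Fintype ι] {lam μ Q qs : ι → ℝ}
    (hρ : ∑ j, lam j / μ j = 1) (hcons : ∑ j, (Q j - qs j) / μ j = 0) (L : ℝ) :
    ∑ j, (lam j * L - qs j + Q j) / μ j = L := by
  have hsplit : ∀ j, (lam j * L - qs j + Q j) / μ j = L * (lam j / μ j) + (Q j - qs j) / μ j :=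
    fun j => by ring
  simp_rw [hsplit, sum_add_distrib, ← mul_sum, hρ, hcons]
  ring

lemma sub_add_nonneg_iff_imp_div_le {lam L q Q : ℝ} (hlam : 0 < lam) (hL : 0 ≤ L) :
    0 ≤ lam * L - q + Q ↔ (Q ≤ q → (q - Q) / lam ≤ L) := by
  rw [div_le_iff₀ hlam]
  constructor
  · intro h _
    linarith
  · intro h
    rcases le_or_gt Q q with hQq | hqQ
    · linarith [h hQq]
    · nlinarith

theorem stmt4_general {ι : Type*} [Fintype ι]
    (lam μ : ι → ℝ) (hlam : ∀ j, 0 < lam j) (hμ : ∀ j, 0 < μ j)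
    (hρ : ∑ j, lam j / μ j = 1)
    (Q qs : ι → ℝ)
    (hcons : ∑ j, (Q j - qs j) / μ j = 0) :
    ∀ L : ℝ, 0 ≤ L →
      ((L = ∑ j, max (lam j * L - qs j + Q j) 0 / μ j) ↔
        (∀ j, Q j ≤ qs j → (qs j - Q j) / lam j ≤ L)) := by
  intro L hL
  have hfix := sum_max_zero_div_eq_sum_div_iff (s := univ)
    (f := fun j => lam j * L - qs j + Q j) fun j _ => hμ j
  rw [sum_div_eq_of_workload hρ hcons L] at hfix
  rw [eq_comm, hfix]
  simp only [mem_univ, true_implies]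
  exact forall_congr' fun j => sub_add_nonneg_iff_imp_div_le (hlam j) hL

theorem stmt4 {ι : Type*} [Fintype ι] [Nonempty ι]
    (lam μ : ι → ℝ) (hlam : ∀ j, 0 < lam j) (hμ : ∀ j, 0 < μ j)
    (hρ : ∑ j, lam j / μ j = 1)
    (Q qs : ι → ℝ) (hQ : ∀ j, 0 ≤ Q j) (hqs : ∀ j, 0 ≤ qs j)
    (hcons : ∑ j, (Q j - qs j) / μ j = 0)
    (hle : ∃ j, Q j ≤ qs j) :
    ∀ L : ℝ, 0 ≤ L →
      ((L = ∑ j, max (lam j * L - qs j + Q j) 0 / μ j) ↔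
        (∀ j, Q j ≤ qs j → (qs j - Q j) / lam j ≤ L)) :=
  stmt4_general lam μ hlam hμ hρ Q qs hcons
end

section
/- Two-resource network LP, case h₁μ₁ ≤ h₂μ₂ + h₃μ₃: in the same LP (minimize h₁q₁ + h₂q₂ + h₃q₃ subject to q₁/μ₁ + q₂/μ₂ = w₁, q₁/μ₁ + q₃/μ₃ = w₂, q_j ≥ 0), if h₁μ₁ ≤ h₂μ₂ + h₃μ₃, then q₁ = μ₁ min(w₁,w₂), q₂ = μ₂(w₁ − w₂)⁺, q₃ = μ₃(w₂ − w₁)⁺ is an optimal solution. -/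
theorem stmt9 (h₁ h₂ h₃ μ₁ μ₂ μ₃ w₁ w₂ : ℝ)
    (hh₁ : 0 < h₁) (hh₂ : 0 < h₂) (hh₃ : 0 < h₃)
    (hμ₁ : 0 < μ₁) (hμ₂ : 0 < μ₂) (hμ₃ : 0 < μ₃)
    (hw₁ : 0 ≤ w₁) (hw₂ : 0 ≤ w₂)
    (hcase : h₁ * μ₁ ≤ h₂ * μ₂ + h₃ * μ₃) :
    let q₁ : ℝ := μ₁ * min w₁ w₂
    let q₂ : ℝ := μ₂ * max (w₁ - w₂) 0
    let q₃ : ℝ := μ₃ * max (w₂ - w₁) 0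
    (0 ≤ q₁ ∧ 0 ≤ q₂ ∧ 0 ≤ q₃ ∧
      q₁ / μ₁ + q₂ / μ₂ = w₁ ∧ q₁ / μ₁ + q₃ / μ₃ = w₂) ∧
    (∀ p₁ p₂ p₃ : ℝ, 0 ≤ p₁ → 0 ≤ p₂ → 0 ≤ p₃ →
      p₁ / μ₁ + p₂ / μ₂ = w₁ → p₁ / μ₁ + p₃ / μ₃ = w₂ →
      h₁ * q₁ + h₂ * q₂ + h₃ * q₃ ≤ h₁ * p₁ + h₂ * p₂ + h₃ * p₃) := by
  intro q₁ q₂ q₃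
  have hne₁ := hμ₁.ne'
  have hne₂ := hμ₂.ne'
  have hne₃ := hμ₃.ne'
  constructor
  · refine ⟨by positivity, by positivity, by positivity, ?_, ?_⟩ <;>
    · simp only [q₁, q₂, q₃, mul_div_assoc, mul_div_cancel_left₀ _ hne₁,
        mul_div_cancel_left₀ _ hne₂, mul_div_cancel_left₀ _ hne₃]
      rcases le_total w₁ w₂ with h | h <;>
        simp [min_eq_left, min_eq_right, max_eq_left, max_eq_right, h, sub_nonneg.2 h,
          sub_nonpos.2 h] <;> ring
  · intro p₁ p₂ p₃ hp₁ hp₂ hp₃ hc₁ hc₂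
    have e₂ : p₂ = μ₂ * (w₁ - p₁ / μ₁) := by field_simp at hc₁ ⊢; linarith
    have e₃ : p₃ = μ₃ * (w₂ - p₁ / μ₁) := by field_simp at hc₂ ⊢; linarith
    have ht1 : p₁ / μ₁ ≤ w₁ := by nlinarith [hp₂, e₂]
    have ht2 : p₁ / μ₁ ≤ w₂ := by nlinarith [hp₃, e₃]
    have hp1 : p₁ = μ₁ * (p₁ / μ₁) := by field_simp
    simp only [q₁, q₂, q₃]
    rw [hp1, e₂, e₃]
    rcases le_total w₁ w₂ with h | h <;>
      simp [min_eq_left, min_eq_right, max_eq_left, max_eq_right, h, sub_nonneg.2 h,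
        sub_nonpos.2 h] <;> nlinarith [mul_pos hh₂ hμ₂, mul_pos hh₃ hμ₃, ht1, ht2]
end

section
/- Minimality of the reflection: suppose W, I, X : ℝ₊ → ℝ are such that W = X + I, W(t) ≥ 0 for all t, I(0) = 0, I nondecreasing. Then I(t) ≥ Ψ(X)(t) := sup_{0≤s≤t}(−X(s))⁺ and W(t) ≥ Φ(X)(t) := X(t) + Ψ(X)(t) for all t ≥ 0. Moreover, if in addition I increases only when W = 0 (i.e., ∫₀^∞ W(t) dI(t) = 0 in the Stieltjes sense and W, X are continuous), then I = Ψ(X) and W = Φ(X). -/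
open Set

/-- One-dimensional reflection: Ψ(x)(t) = sup_{0 ≤ s ≤ t} (−x(s))⁺. -/
noncomputable def Psi (x : ℝ → ℝ) (t : ℝ) : ℝ :=
  ⨆ s : Set.Icc (0 : ℝ) t, max (-(x s)) 0

/-- Φ(x)(t) = x(t) + Ψ(x)(t). -/
noncomputable def Phi (x : ℝ → ℝ) (t : ℝ) : ℝ :=
  x t + Psi x t

theorem stmt14 (W I X : ℝ → ℝ)
    (hdecomp : ∀ t : ℝ, 0 ≤ t → W t = X t + I t)
    (hWnonneg : ∀ t : ℝ, 0 ≤ t → 0 ≤ W t)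
    (hI0 : I 0 = 0)
    (hImono : MonotoneOn I (Set.Ici (0 : ℝ))) :
    ((∀ t : ℝ, 0 ≤ t → Psi X t ≤ I t) ∧ (∀ t : ℝ, 0 ≤ t → Phi X t ≤ W t)) ∧
    ((Continuous W → Continuous X → 0 ≤ X 0 →
      (∀ s t : ℝ, 0 ≤ s → s ≤ t → (∀ u ∈ Set.Icc s t, 0 < W u) → I s = I t) →
      (∀ t : ℝ, 0 ≤ t → I t = Psi X t ∧ W t = Phi X t))) := by
  have hInonneg : ∀ t : ℝ, 0 ≤ t → 0 ≤ I t := by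
    intro t ht
    have := hImono (self_mem_Ici) (mem_Ici.2 ht) ht
    rwa [hI0] at this
  have hpsi : ∀ t : ℝ, 0 ≤ t → Psi X t ≤ I t := by
    intro t ht
    haveI : Nonempty (Icc (0:ℝ) t) := ⟨⟨0, le_refl 0, ht⟩⟩
    apply ciSup_le
    rintro ⟨s, hs0, hst⟩
    simp only
    apply max_le
    · have hIs : -X s ≤ I s := by
        have hw := hdecomp s hs0
        have := hWnonneg s hs0
        linarith
      exact hIs.trans (hImono (mem_Ici.2 hs0) (mem_Ici.2 ht) hst)
    · exact hInonneg t ht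
  have hphi : ∀ t : ℝ, 0 ≤ t → Phi X t ≤ W t := by
    intro t ht
    have := hpsi t ht
    rw [Phi, hdecomp t ht]
    linarith
  refine ⟨⟨hpsi, hphi⟩, ?_⟩
  intro hW hX _ hflat t ht
  haveI : Nonempty (Icc (0:ℝ) t) := ⟨⟨0, le_refl 0, ht⟩⟩
  -- bounded above
  have hbdd : BddAbove (Set.range fun s : Icc (0:ℝ) t => max (-(X s)) 0) := by
    have hc : ContinuousOn (fun s => max (-(X s)) 0) (Icc (0:ℝ) t) :=
      ((hX.neg).max continuous_const).continuousOn
    have := (isCompact_Icc.image_of_continuousOn hc).bddAbove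
    rwa [Set.image_eq_range] at this
  have hpsi_nonneg : 0 ≤ Psi X t := by
    have h0 : (0:ℝ) ≤ max (-(X ((⟨0, le_refl 0, ht⟩ : Icc (0:ℝ) t) : ℝ))) 0 :=
      le_max_right _ _
    exact h0.trans (le_ciSup hbdd _)
  have hIt_le : I t ≤ Psi X t := by
    by_cases hZ : ({s | s ∈ Icc (0:ℝ) t ∧ W s = 0} : Set ℝ).Nonempty
    · -- σ = last zero of W before t
      set Z : Set ℝ := {s | s ∈ Icc (0:ℝ) t ∧ W s = 0} with hZdef
      have hZclosed : IsClosed Z := by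
        have : Z = Icc (0:ℝ) t ∩ W ⁻¹' {0} := by
          ext u; simp [hZdef, Set.mem_inter_iff]
        rw [this]
        exact isClosed_Icc.inter (isClosed_singleton.preimage hW)
      have hZbdd : BddAbove Z := ⟨t, fun u hu => hu.1.2⟩
      set σ := sSup Z with hσdef
      have hσZ : σ ∈ Z := hZclosed.csSup_mem hZ hZbdd
      have hσ0 : 0 ≤ σ := hσZ.1.1
      have hσt : σ ≤ t := hσZ.1.2
      have hWσ : W σ = 0 := hσZ.2
      -- I is constant equal to I t on (σ, t]
      have hconst : ∀ s ∈ Ioc σ t, I s = I t := by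
        intro s hs
        have hs0 : 0 ≤ s := hσ0.trans hs.1.le
        refine hflat s t hs0 hs.2 ?_
        intro u hu
        have hu0 : 0 ≤ u := hs0.trans hu.1
        rcases (hWnonneg u hu0).lt_or_eq with h | h
        · exact h
        · exfalso
          have huZ : u ∈ Z := ⟨⟨hu0, hu.2⟩, h.symm⟩
          have : u ≤ σ := le_csSup hZbdd huZ
          linarith [hs.1, hu.1]
      -- g = W - X is continuous and agrees with I on [0,∞)
      have hgσ : W σ - X σ = I t := by
        rcases eq_or_lt_of_le hσt with h | h
        · rw [h]; have := hdecomp t ht; linarith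
        · have heq : Set.EqOn (fun u => W u - X u) (fun _ => I t) (Ioc σ t) := by
            intro u hu
            have hu0 : 0 ≤ u := hσ0.trans hu.1.le
            have := hdecomp u hu0
            have := hconst u hu
            simp only
            linarith
          have := heq.closure (hW.sub hX) continuous_const
          have hmem : σ ∈ closure (Ioc σ t) := by
            rw [closure_Ioc h.ne]
            exact ⟨le_refl σ, hσt⟩
          exact this hmem
      have : I t = -X σ := by rw [← hgσ, hWσ]; ring
      rw [this]
      have h1 : -X σ ≤ max (-(X ((⟨σ, hσ0, hσt⟩ : Icc (0:ℝ) t) : ℝ))) 0 := le_max_left _ _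
      exact h1.trans (le_ciSup hbdd _)
    · -- W > 0 on all of [0,t], so I t = I 0 = 0
      have hpos : ∀ u ∈ Icc (0:ℝ) t, 0 < W u := by
        intro u hu
        rcases (hWnonneg u hu.1).lt_or_eq with h | h
        · exact h
        · exact absurd ⟨hu, h.symm⟩ (fun hx => hZ ⟨u, hx⟩)
      have := hflat 0 t (le_refl 0) ht hpos
      rw [← this, hI0]
      exact hpsi_nonneg
  have hI : I t = Psi X t := le_antisymm hIt_le (hpsi t ht)
  refine ⟨hI, ?_⟩
  rw [Phi, ← hI, hdecomp t ht]
end
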